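/- Let p be an odd prime and u0,u1,u2,u3 squarefree integers whose reduction mod p lies in Ω_p (the union of the four sets Ω_{p,i} of the paper). Then the quadric X: u0u2 x0^2 + u1u3 x1^2 + u0u3 x2^2 + u1u2 x3^2 = 0 has no Q_p-point; in particular the adelic set X(A_Q) is empty. -/

import Mathlib

/-!
Suppose `u0 = p v`. Then `v` is a unit mod `p` by squarefreeness and the form is
`p v (u2 x0² + u3 x2²) + u1 (u3 x1² + u2 x3²)`, where both binary forms are anisotropic mod `p`
because `-u2 u3` is not a square. Scale a nontrivial `ℚ_p`-zero to a `ℤ_p`-zero with a coordinate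
equal to `1`. Reducing mod `p` gives `x1 ≡ x3 ≡ 0`; dividing the equation by `p` and reducing again
gives `x0 ≡ x2 ≡ 0`, a contradiction. The other three cases follow by permuting the `uᵢ`, which
only permutes the variables.
-/

lemma eq_zero_of_mul_sq_add_mul_sq_eq_zero {K : Type*} [Field K] {s t : K} (hs : s ≠ 0)
    (ht : t ≠ 0) (hst : ¬ ∃ a : K, a ≠ 0 ∧ a ^ 2 = -(s * t)) {y z : K}
    (h : s * y ^ 2 + t * z ^ 2 = 0) : y = 0 ∧ z = 0 := by
  have hz : z = 0 := by
    by_contra hz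
    have hy : y ≠ 0 := by
      rintro rfl
      simp_all
    refine hst ⟨s * y / z, by positivity, ?_⟩
    field_simp
    linear_combination h
  subst hz
  simpa [hs] using h

namespace PadicInt

variable {p : ℕ} [Fact p.Prime]

lemma toZMod_eq_zero_iff_dvd (x : ℤ_[p]) : toZMod x = 0 ↔ (p : ℤ_[p]) ∣ x := by
  rw [← RingHom.mem_ker, ker_toZMod, maximalIdeal_eq_span_p, Ideal.mem_span_singleton]

lemma exists_eq_one_and_mul_eq {ι : Type*} [Finite ι] {x : ι → ℚ_[p]} (hx : x ≠ 0) :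
    ∃ (i : ι) (y : ι → ℤ_[p]), y i = 1 ∧ x i ≠ 0 ∧ ∀ j, x j = x i * y j := by
  obtain ⟨k, -⟩ := Function.ne_iff.mp hx
  have : Nonempty ι := ⟨k⟩
  obtain ⟨i, hi⟩ := Finite.exists_max fun j => ‖x j‖
  have hxi : x i ≠ 0 := by
    contrapose! hx
    ext j
    simpa [hx] using hi j
  have hle : ∀ j, ‖x j / x i‖ ≤ 1 := fun j => by
    rw [norm_div, div_le_one (norm_pos_iff.mpr hxi)]
    exact hi j
  exact ⟨i, fun j => ⟨x j / x i, hle j⟩, Subtype.ext (div_self hxi), hxi,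
    fun j => (mul_div_cancel₀ _ hxi).symm⟩

variable {a b c d : ℤ_[p]}
  (hab : ∀ y z : ZMod p, toZMod a * y ^ 2 + toZMod b * z ^ 2 = 0 → y = 0 ∧ z = 0)
  (hcd : ∀ y z : ZMod p, toZMod c * y ^ 2 + toZMod d * z ^ 2 = 0 → y = 0 ∧ z = 0)
include hab

lemma toZMod_eq_zero_of_mul_sq_add_mul_sq_add_p_mul {y z r : ℤ_[p]}
    (h : a * y ^ 2 + b * z ^ 2 + p * r = 0) : toZMod y = 0 ∧ toZMod z = 0 :=
  hab _ _ (by simpa using congrArg toZMod h)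

include hcd

lemma toZMod_eq_zero_of_p_mul_add_eq_zero {y : Fin 4 → ℤ_[p]}
    (h : p * a * y 0 ^ 2 + c * y 1 ^ 2 + p * b * y 2 ^ 2 + d * y 3 ^ 2 = 0) :
    ∀ i, toZMod (y i) = 0 := by
  obtain ⟨h1, h3⟩ := toZMod_eq_zero_of_mul_sq_add_mul_sq_add_p_mul hcd
    (y := y 1) (z := y 3) (r := a * y 0 ^ 2 + b * y 2 ^ 2) (by linear_combination h)
  obtain ⟨z1, hz1⟩ := (toZMod_eq_zero_iff_dvd _).1 h1
  obtain ⟨z3, hz3⟩ := (toZMod_eq_zero_iff_dvd _).1 h3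
  have hp : (p : ℤ_[p]) ≠ 0 := Nat.cast_ne_zero.mpr (Fact.out : p.Prime).ne_zero
  have h' : a * y 0 ^ 2 + b * y 2 ^ 2 + p * (c * z1 ^ 2 + d * z3 ^ 2) = 0 :=
    mul_left_cancel₀ hp (by rw [hz1, hz3] at h; linear_combination h)
  obtain ⟨h0, h2⟩ := toZMod_eq_zero_of_mul_sq_add_mul_sq_add_p_mul hab h'
  intro i
  fin_cases i <;> simpa

lemma eq_zero_of_p_mul_add_eq_zero {x : Fin 4 → ℚ_[p]}
    (h : p * a * x 0 ^ 2 + c * x 1 ^ 2 + p * b * x 2 ^ 2 + d * x 3 ^ 2 = 0) : x = 0 := by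
  by_contra hx
  obtain ⟨i, y, hyi, hxi, hxy⟩ := exists_eq_one_and_mul_eq hx
  have hy : p * a * y 0 ^ 2 + c * y 1 ^ 2 + p * b * y 2 ^ 2 + d * y 3 ^ 2 = 0 := by
    rw [← coe_eq_zero, ← mul_eq_zero_iff_left (pow_ne_zero 2 hxi)]
    rw [hxy 0, hxy 1, hxy 2, hxy 3] at h
    push_cast
    linear_combination h
  simpa [hyi] using toZMod_eq_zero_of_p_mul_add_eq_zero hab hcd hy i

end PadicInt

lemma intCast_ne_zero_of_squarefree_mul {p : ℕ} [Fact p.Prime] {v : ℤ}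
    (h : Squarefree ((p : ℤ) * v)) : (v : ZMod p) ≠ 0 := by
  rw [Ne, ZMod.intCast_zmod_eq_zero_iff_dvd]
  exact fun hpv => (Nat.prime_iff_prime_int.mp Fact.out).not_isUnit
    ((squarefree_mul_iff.mp h).1 dvd_rfl hpv)

def IsotropicQuadric (K : Type*) [Ring K] (u0 u1 u2 u3 : ℤ) : Prop :=
  ∃ x : Fin 4 → K, x ≠ 0 ∧
    ((u0 * u2 : ℤ) : K) * (x 0) ^ 2 + ((u1 * u3 : ℤ) : K) * (x 1) ^ 2 +
      ((u0 * u3 : ℤ) : K) * (x 2) ^ 2 + ((u1 * u2 : ℤ) : K) * (x 3) ^ 2 = 0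

namespace IsotropicQuadric

variable {K : Type*} [CommRing K] {u0 u1 u2 u3 : ℤ}

lemma swap_pairs (h : IsotropicQuadric K u0 u1 u2 u3) : IsotropicQuadric K u1 u0 u3 u2 := by
  obtain ⟨x, hx, hQ⟩ := h
  refine ⟨![x 1, x 0, x 3, x 2], ?_, by push_cast at hQ ⊢; linear_combination hQ⟩
  contrapose! hx
  simp [funext_iff, Fin.forall_fin_succ] at hx ⊢
  tauto

lemma swap_halves (h : IsotropicQuadric K u0 u1 u2 u3) : IsotropicQuadric K u2 u3 u0 u1 := by
  obtain ⟨x, hx, hQ⟩ := h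
  refine ⟨![x 0, x 1, x 3, x 2], ?_, by push_cast at hQ ⊢; linear_combination hQ⟩
  contrapose! hx
  simp [funext_iff, Fin.forall_fin_succ] at hx ⊢
  tauto

end IsotropicQuadric

lemma not_isotropicQuadric_padic {p : ℕ} [Fact p.Prime] {u0 u1 u2 u3 : ℤ}
    (hsq : Squarefree u0) (hu0 : (u0 : ZMod p) = 0) (hne : (u1 : ZMod p) * u2 * u3 ≠ 0)
    (hns : ¬ ∃ a : ZMod p, a ≠ 0 ∧ a ^ 2 = -((u2 : ZMod p) * u3)) :
    ¬ IsotropicQuadric ℚ_[p] u0 u1 u2 u3 := by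
  rintro ⟨x, hx, hQ⟩
  obtain ⟨v, rfl⟩ := (ZMod.intCast_zmod_eq_zero_iff_dvd u0 p).1 hu0
  have hv := intCast_ne_zero_of_squarefree_mul hsq
  obtain ⟨⟨hu1, hu2⟩, hu3⟩ := by simpa only [mul_ne_zero_iff] using hne
  have hbin (w : ℤ) (hw : (w : ZMod p) ≠ 0) (y z : ZMod p)
      (h : (w * u2 : ZMod p) * y ^ 2 + (w * u3) * z ^ 2 = 0) : y = 0 ∧ z = 0 :=
    eq_zero_of_mul_sq_add_mul_sq_eq_zero hu2 hu3 hns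
      (mul_left_cancel₀ hw (by linear_combination h))
  refine hx (PadicInt.eq_zero_of_p_mul_add_eq_zero (a := ((v * u2 : ℤ) : ℤ_[p]))
    (b := ((v * u3 : ℤ) : ℤ_[p])) (c := ((u1 * u3 : ℤ) : ℤ_[p])) (d := ((u1 * u2 : ℤ) : ℤ_[p]))
    ?_ ?_ ?_)
  · simpa using hbin v hv
  · intro y z h
    exact (hbin u1 hu1 z y (by simp at h; linear_combination h)).symm
  · push_cast at hQ ⊢
    linear_combination hQ

theorem stmt_19_general (p : ℕ) [Fact p.Prime]
    (u0 u1 u2 u3 : ℤ)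
    (h0 : Squarefree u0) (h1 : Squarefree u1) (h2 : Squarefree u2) (h3 : Squarefree u3)
    (hmem :
      ((u0 : ZMod p) = 0 ∧ (u1 : ZMod p) * (u2 : ZMod p) * (u3 : ZMod p) ≠ 0 ∧
        ¬ ∃ a : ZMod p, a ≠ 0 ∧ a ^ 2 = -((u2 : ZMod p) * (u3 : ZMod p))) ∨
      ((u1 : ZMod p) = 0 ∧ (u0 : ZMod p) * (u2 : ZMod p) * (u3 : ZMod p) ≠ 0 ∧
        ¬ ∃ a : ZMod p, a ≠ 0 ∧ a ^ 2 = -((u2 : ZMod p) * (u3 : ZMod p))) ∨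
      ((u2 : ZMod p) = 0 ∧ (u0 : ZMod p) * (u1 : ZMod p) * (u3 : ZMod p) ≠ 0 ∧
        ¬ ∃ a : ZMod p, a ≠ 0 ∧ a ^ 2 = -((u0 : ZMod p) * (u1 : ZMod p))) ∨
      ((u3 : ZMod p) = 0 ∧ (u0 : ZMod p) * (u1 : ZMod p) * (u2 : ZMod p) ≠ 0 ∧
        ¬ ∃ a : ZMod p, a ≠ 0 ∧ a ^ 2 = -((u0 : ZMod p) * (u1 : ZMod p)))) :
    (¬ ∃ x : Fin 4 → ℚ_[p], x ≠ 0 ∧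
        ((u0 * u2 : ℤ) : ℚ_[p]) * (x 0) ^ 2 + ((u1 * u3 : ℤ) : ℚ_[p]) * (x 1) ^ 2 +
          ((u0 * u3 : ℤ) : ℚ_[p]) * (x 2) ^ 2 + ((u1 * u2 : ℤ) : ℚ_[p]) * (x 3) ^ 2 = 0) ∧
    ¬ ((∃ x : Fin 4 → ℝ, x ≠ 0 ∧
          ((u0 * u2 : ℤ) : ℝ) * (x 0) ^ 2 + ((u1 * u3 : ℤ) : ℝ) * (x 1) ^ 2 +
            ((u0 * u3 : ℤ) : ℝ) * (x 2) ^ 2 + ((u1 * u2 : ℤ) : ℝ) * (x 3) ^ 2 = 0) ∧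
        (∀ (q : ℕ) [Fact q.Prime], ∃ x : Fin 4 → ℚ_[q], x ≠ 0 ∧
          ((u0 * u2 : ℤ) : ℚ_[q]) * (x 0) ^ 2 + ((u1 * u3 : ℤ) : ℚ_[q]) * (x 1) ^ 2 +
            ((u0 * u3 : ℤ) : ℚ_[q]) * (x 2) ^ 2 + ((u1 * u2 : ℤ) : ℚ_[q]) * (x 3) ^ 2 = 0)) := by
  have H : ¬ IsotropicQuadric ℚ_[p] u0 u1 u2 u3 := by
    rcases hmem with ⟨hz, hne, hns⟩ | ⟨hz, hne, hns⟩ | ⟨hz, hne, hns⟩ | ⟨hz, hne, hns⟩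
    · exact not_isotropicQuadric_padic h0 hz hne hns
    · exact fun h => not_isotropicQuadric_padic h1 hz (by convert hne using 1; ring)
        (mul_comm (u2 : ZMod p) u3 ▸ hns) h.swap_pairs
    · exact fun h => not_isotropicQuadric_padic h2 hz (by convert hne using 1; ring) hns
        h.swap_halves
    · exact fun h => not_isotropicQuadric_padic h3 hz (by convert hne using 1; ring)
        (mul_comm (u0 : ZMod p) u1 ▸ hns) h.swap_halves.swap_pairs
  exact ⟨H, fun ⟨_, hall⟩ => H (hall p)⟩

/-- If the squarefree coefficients reduce into `Ω_p`, then the quadric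
`u0u2 x0² + u1u3 x1² + u0u3 x2² + u1u2 x3² = 0` has no `ℚ_p`-point; in particular it is
not everywhere locally soluble. -/
theorem stmt_19 (p : ℕ) [Fact p.Prime] (hodd : p ≠ 2)
    (u0 u1 u2 u3 : ℤ)
    (h0 : Squarefree u0) (h1 : Squarefree u1) (h2 : Squarefree u2) (h3 : Squarefree u3)
    (hmem :
      ((u0 : ZMod p) = 0 ∧ (u1 : ZMod p) * (u2 : ZMod p) * (u3 : ZMod p) ≠ 0 ∧
        ¬ ∃ a : ZMod p, a ≠ 0 ∧ a ^ 2 = -((u2 : ZMod p) * (u3 : ZMod p))) ∨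
      ((u1 : ZMod p) = 0 ∧ (u0 : ZMod p) * (u2 : ZMod p) * (u3 : ZMod p) ≠ 0 ∧
        ¬ ∃ a : ZMod p, a ≠ 0 ∧ a ^ 2 = -((u2 : ZMod p) * (u3 : ZMod p))) ∨
      ((u2 : ZMod p) = 0 ∧ (u0 : ZMod p) * (u1 : ZMod p) * (u3 : ZMod p) ≠ 0 ∧
        ¬ ∃ a : ZMod p, a ≠ 0 ∧ a ^ 2 = -((u0 : ZMod p) * (u1 : ZMod p))) ∨
      ((u3 : ZMod p) = 0 ∧ (u0 : ZMod p) * (u1 : ZMod p) * (u2 : ZMod p) ≠ 0 ∧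
        ¬ ∃ a : ZMod p, a ≠ 0 ∧ a ^ 2 = -((u0 : ZMod p) * (u1 : ZMod p)))) :
    (¬ ∃ x : Fin 4 → ℚ_[p], x ≠ 0 ∧
        ((u0 * u2 : ℤ) : ℚ_[p]) * (x 0) ^ 2 + ((u1 * u3 : ℤ) : ℚ_[p]) * (x 1) ^ 2 +
          ((u0 * u3 : ℤ) : ℚ_[p]) * (x 2) ^ 2 + ((u1 * u2 : ℤ) : ℚ_[p]) * (x 3) ^ 2 = 0) ∧
    ¬ ((∃ x : Fin 4 → ℝ, x ≠ 0 ∧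
          ((u0 * u2 : ℤ) : ℝ) * (x 0) ^ 2 + ((u1 * u3 : ℤ) : ℝ) * (x 1) ^ 2 +
            ((u0 * u3 : ℤ) : ℝ) * (x 2) ^ 2 + ((u1 * u2 : ℤ) : ℝ) * (x 3) ^ 2 = 0) ∧
        (∀ (q : ℕ) [Fact q.Prime], ∃ x : Fin 4 → ℚ_[q], x ≠ 0 ∧
          ((u0 * u2 : ℤ) : ℚ_[q]) * (x 0) ^ 2 + ((u1 * u3 : ℤ) : ℚ_[q]) * (x 1) ^ 2 +
            ((u0 * u3 : ℤ) : ℚ_[q]) * (x 2) ^ 2 + ((u1 * u2 : ℤ) : ℚ_[q]) * (x 3) ^ 2 = 0)) :=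
  stmt_19_general p u0 u1 u2 u3 h0 h1 h2 h3 hmem
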